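/- For the simple right A-module S_e and the projective right A-module P(e) = 1_e·A one has Ext²_A(S_e, P(e)) ≅ ℂ and Ext^n_A(S_e, P(e)) = 0 for all n ≠ 2 (in particular Hom_A(S_e, P(e)) = 0 and Ext¹_A(S_e, P(e)) = 0). -/

import Mathlib

open CategoryTheory MulOpposite Polynomial

namespace Sl2Q

/-- Generators of the path algebra of the quiver `e ⇄ s`:
`0 ↦ 1_e`, `1 ↦ 1_s`, `2 ↦ a : e → s`, `3 ↦ b : s → e`. -/
abbrev FA : Type := FreeAlgebra ℂ (Fin 4)

/-- The defining relations of the path algebra `ℂQ/(ba)`: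
the trivial paths are orthogonal idempotents summing to `1`, the arrows are
compatible with sources and targets, and the path `e → s → e` (first `a`, then `b`,
written `b * a`) is zero. -/
inductive PathRel : FA → FA → Prop
  | idem_e : PathRel (FreeAlgebra.ι ℂ 0 * FreeAlgebra.ι ℂ 0) (FreeAlgebra.ι ℂ 0)
  | idem_s : PathRel (FreeAlgebra.ι ℂ 1 * FreeAlgebra.ι ℂ 1) (FreeAlgebra.ι ℂ 1)
  | orth_es : PathRel (FreeAlgebra.ι ℂ 0 * FreeAlgebra.ι ℂ 1) 0
  | orth_se : PathRel (FreeAlgebra.ι ℂ 1 * FreeAlgebra.ι ℂ 0) 0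
  | sum_one : PathRel (FreeAlgebra.ι ℂ 0 + FreeAlgebra.ι ℂ 1) 1
  | a_tgt : PathRel (FreeAlgebra.ι ℂ 1 * FreeAlgebra.ι ℂ 2) (FreeAlgebra.ι ℂ 2)
  | a_src : PathRel (FreeAlgebra.ι ℂ 2 * FreeAlgebra.ι ℂ 0) (FreeAlgebra.ι ℂ 2)
  | b_tgt : PathRel (FreeAlgebra.ι ℂ 0 * FreeAlgebra.ι ℂ 3) (FreeAlgebra.ι ℂ 3)
  | b_src : PathRel (FreeAlgebra.ι ℂ 3 * FreeAlgebra.ι ℂ 1) (FreeAlgebra.ι ℂ 3)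
  | ba : PathRel (FreeAlgebra.ι ℂ 3 * FreeAlgebra.ι ℂ 2) 0

/-- The path algebra `A = ℂ[e ⇄ s]/(ba)`. -/
def A : Type := RingQuot PathRel

noncomputable instance : Ring A := inferInstanceAs (Ring (RingQuot PathRel))
noncomputable instance : Algebra ℂ A := inferInstanceAs (Algebra ℂ (RingQuot PathRel))

noncomputable def toA : FreeAlgebra ℂ (Fin 4) →ₐ[ℂ] A := RingQuot.mkAlgHom ℂ PathRel

noncomputable def gen (i : Fin 4) : A := toA (FreeAlgebra.ι ℂ i)

/-- the idempotent `1_e` -/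
noncomputable def oneE : A := gen 0
/-- the idempotent `1_s` -/
noncomputable def oneS : A := gen 1
/-- the arrow `a : e → s` -/
noncomputable def arrA : A := gen 2
/-- the arrow `b : s → e` -/
noncomputable def arrB : A := gen 3
/-- the loop `ab` at `s` (first `b`, then `a`) -/
noncomputable def ab : A := arrA * arrB

lemma rel_eq {x y : FA} (h : PathRel x y) : toA x = toA y :=
  RingQuot.mkAlgHom_rel ℂ h

lemma oneS_mul_arrA : oneS * arrA = arrA := by
  rw [oneS, arrA, gen, gen, ← map_mul]
  exact rel_eq PathRel.a_tgt

lemma oneE_mul_arrB : oneE * arrB = arrB := by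
  rw [oneE, arrB, gen, gen, ← map_mul]
  exact rel_eq PathRel.b_tgt

lemma oneS_mul_ab : oneS * ab = ab := by
  rw [ab, ← mul_assoc, oneS_mul_arrA]

/-- `A` is a right module over itself, i.e. a module over `Aᵐᵒᵖ`;
scalars `ℂ` act compatibly. -/
instance : IsScalarTower ℂ Aᵐᵒᵖ A :=
  ⟨fun c r x => by
    rw [MulOpposite.smul_eq_mul_unop, MulOpposite.smul_eq_mul_unop, MulOpposite.unop_smul,
      mul_smul_comm]⟩

instance : SMulCommClass Aᵐᵒᵖ ℂ A :=
  ⟨fun r c x => by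
    rw [MulOpposite.smul_eq_mul_unop, MulOpposite.smul_eq_mul_unop, smul_mul_assoc]⟩

/-- `P u = u·A`, the right ideal generated by `u`, as a right `A`-module
(i.e. a module over `Aᵐᵒᵖ`). -/
noncomputable def P (u : A) : Submodule Aᵐᵒᵖ A := Submodule.span Aᵐᵒᵖ {u}

lemma mem_P {u z : A} (h : u * z = z) : z ∈ P u :=
  Submodule.mem_span_singleton.mpr ⟨op z, by rw [op_smul_eq_mul, h]⟩

instance (p : Submodule Aᵐᵒᵖ A) : SMulCommClass Aᵐᵒᵖ ℂ ↥p :=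
  ⟨fun r c x => Subtype.ext (smul_comm r c (x : A))⟩

instance (p : Submodule Aᵐᵒᵖ A) : IsScalarTower ℂ Aᵐᵒᵖ ↥p :=
  ⟨fun c r x => Subtype.ext (smul_assoc c r (x : A))⟩

/-- Left multiplication by `z` as a homomorphism of right `A`-modules `P u ⟶ P v`,
where `v * z = z` (i.e. `z ∈ v·A`). -/
noncomputable def lmul (u : A) {v z : A} (h : v * z = z) : ↥(P u) →ₗ[Aᵐᵒᵖ] ↥(P v) where
  toFun x := ⟨z * (x : A), mem_P (by rw [← mul_assoc, h])⟩
  map_add' x y := Subtype.ext (by simp [mul_add])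
  map_smul' r x := Subtype.ext (by
    simp [MulOpposite.smul_eq_mul_unop, mul_assoc])

end Sl2Q

namespace Sl2Q

/-- The algebra map `A → ℂ` corresponding to the vertex `e`
(sending `1_e ↦ 1` and `1_s, a, b ↦ 0`). -/
noncomputable def εe : A →ₐ[ℂ] ℂ :=
  RingQuot.liftAlgHom ℂ
    ⟨FreeAlgebra.lift ℂ (fun i => if i = 0 then (1 : ℂ) else 0), by
      rintro x y h
      induction h <;>
        simp [FreeAlgebra.lift_ι_apply]⟩

/-- The one-dimensional simple right `A`-module concentrated at the vertex `e`:
the underlying type is `ℂ`, and `A` acts (on the right) through `εe`,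
so that `1_e` acts as the identity and `1_s`, `a`, `b` act as zero. -/
def Se : Type := ℂ

noncomputable instance : AddCommGroup Se := inferInstanceAs (AddCommGroup ℂ)
noncomputable instance : Module ℂ Se := inferInstanceAs (Module ℂ ℂ)

/-- the (right) action of `A` on `Se` through `εe` -/
noncomputable instance : Module Aᵐᵒᵖ Se :=
  Module.compHom ℂ ((εe.toRingHom).fromOpposite (fun _ _ => mul_comm _ _))

lemma Se.smul_def (r : Aᵐᵒᵖ) (c : Se) : r • c = εe (unop r) • c := rfl

end Sl2Q

namespace Sl2Q
open CategoryTheory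

/-- `S_e` as an object of the category of right `A`-modules. -/
noncomputable abbrev SeM : ModuleCat.{0} Aᵐᵒᵖ := ModuleCat.of Aᵐᵒᵖ Se

/-- `Ext^n_A(M, N)` (in the category of right `A`-modules), as a `ℂ`-module. -/
noncomputable abbrev ExtA (M N : ModuleCat.{0} Aᵐᵒᵖ) (n : ℕ) : ModuleCat ℂ :=
  ((_root_.Ext ℂ (ModuleCat.{0} Aᵐᵒᵖ) n).obj (Opposite.op M)).obj N

end Sl2Q

namespace Sl2Q
open CategoryTheory

/-- `P(e)` as an object of the category of right `A`-modules. -/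
noncomputable abbrev PeM : ModuleCat.{0} Aᵐᵒᵖ := ModuleCat.of Aᵐᵒᵖ ↥(P oneE)

end Sl2Q

/-!
With `P(s) = 1_s A`, the simple module `S_e` has the projective resolution
`0 → P(e) --a·--> P(s) --b·--> P(e) --ε--> S_e → 0`, whose exactness is read off the bases
`1_e, b` of `P(e)` and `1_s, a, ab` of `P(s)`. A morphism `u A → v A` between right ideals generated
by idempotents is left multiplication by an element of `v A u`, and `1_e A 1_e = ℂ 1_e`,
`1_e A 1_s = ℂ b`. So `Hom_A(-, P(e))` turns the resolution into `ℂ → ℂ → ℂ`, where the first map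
`id ↦ b·` is an isomorphism and the second vanishes because `ba = 0`: only `Ext²` survives, and it is
one-dimensional. A morphism `S_e → P(e)` lands in the elements fixed by `1_e`, i.e. in `ℂ 1_e`, on
which `b` acts injectively, so it is zero.
-/

section IdempotentRightIdeal

variable {R : Type*} [Ring R] {u : R}

theorem IsIdempotentElem.mul_eq_self_of_mem_span (hu : IsIdempotentElem u) {x : R}
    (hx : x ∈ Submodule.span Rᵐᵒᵖ {u}) : u * x = x := by
  obtain ⟨r, rfl⟩ := Submodule.mem_span_singleton.mp hx
  rw [smul_eq_mul_unop, ← mul_assoc, hu.eq]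

variable (u) in
noncomputable def mulLeftToSpan : R →ₗ[Rᵐᵒᵖ] Submodule.span Rᵐᵒᵖ {u} where
  toFun z := ⟨u * z, Submodule.mem_span_singleton.mpr ⟨op z, by rw [smul_eq_mul_unop, unop_op]⟩⟩
  map_add' x y := Subtype.ext (mul_add u x y)
  map_smul' r x := Subtype.ext (by simp [smul_eq_mul_unop, mul_assoc])

theorem IsIdempotentElem.projective_span_singleton (hu : IsIdempotentElem u) :
    Module.Projective Rᵐᵒᵖ (Submodule.span Rᵐᵒᵖ {u}) := by
  have : Module.Projective Rᵐᵒᵖ R :=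
    Module.Projective.of_equiv (MulOpposite.opLinearEquiv Rᵐᵒᵖ).symm
  exact Module.Projective.of_split (Submodule.span Rᵐᵒᵖ {u}).subtype (mulLeftToSpan u)
    (LinearMap.ext fun x => Subtype.ext (hu.mul_eq_self_of_mem_span x.2))

end IdempotentRightIdeal

namespace Sl2Q
open CategoryTheory

theorem gen_mul_gen (i j : Fin 4) :
    gen i * gen j = toA (FreeAlgebra.ι ℂ i * FreeAlgebra.ι ℂ j) :=
  (map_mul toA _ _).symm

@[simp] theorem oneE_mul_oneE : oneE * oneE = oneE :=
  (gen_mul_gen 0 0).trans (rel_eq .idem_e)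

@[simp] theorem oneS_mul_oneS : oneS * oneS = oneS :=
  (gen_mul_gen 1 1).trans (rel_eq .idem_s)

@[simp] theorem oneE_mul_oneS : oneE * oneS = 0 := by
  rw [oneE, oneS, gen_mul_gen, rel_eq .orth_es, map_zero]

@[simp] theorem oneS_mul_oneE : oneS * oneE = 0 := by
  rw [oneS, oneE, gen_mul_gen, rel_eq .orth_se, map_zero]

@[simp] theorem arrA_mul_oneE : arrA * oneE = arrA :=
  (gen_mul_gen 2 0).trans (rel_eq .a_src)

@[simp] theorem arrB_mul_oneS : arrB * oneS = arrB :=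
  (gen_mul_gen 3 1).trans (rel_eq .b_src)

@[simp] theorem arrB_mul_arrA : arrB * arrA = 0 := by
  rw [arrB, arrA, gen_mul_gen, rel_eq .ba, map_zero]

attribute [simp] oneS_mul_arrA oneE_mul_arrB

theorem isIdempotentElem_oneE : IsIdempotentElem oneE := oneE_mul_oneE

theorem isIdempotentElem_oneS : IsIdempotentElem oneS := oneS_mul_oneS

@[simp] theorem oneE_mul_arrA : oneE * arrA = 0 := by
  rw [← oneS_mul_arrA, ← mul_assoc, oneE_mul_oneS, zero_mul]

@[simp] theorem oneS_mul_arrB : oneS * arrB = 0 := by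
  rw [← oneE_mul_arrB, ← mul_assoc, oneS_mul_oneE, zero_mul]

@[simp] theorem arrA_mul_oneS : arrA * oneS = 0 := by
  rw [← arrA_mul_oneE, mul_assoc, oneE_mul_oneS, mul_zero]

@[simp] theorem arrB_mul_oneE : arrB * oneE = 0 := by
  rw [← arrB_mul_oneS, mul_assoc, oneS_mul_oneE, mul_zero]

@[simp] theorem arrA_mul_arrA : arrA * arrA = 0 := by
  nth_rewrite 2 [← oneS_mul_arrA]
  rw [← mul_assoc, arrA_mul_oneS, zero_mul]

@[simp] theorem arrB_mul_arrB : arrB * arrB = 0 := by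
  nth_rewrite 2 [← oneE_mul_arrB]
  rw [← mul_assoc, arrB_mul_oneE, zero_mul]

@[simp] theorem arrB_mul_ab : arrB * ab = 0 := by
  rw [ab, ← mul_assoc, arrB_mul_arrA, zero_mul]

@[simp] theorem arrA_mul_arrB : arrA * arrB = ab := rfl

@[simp] theorem ab_mul_oneE : ab * oneE = 0 := by rw [ab, mul_assoc, arrB_mul_oneE, mul_zero]
@[simp] theorem ab_mul_oneS : ab * oneS = ab := by rw [ab, mul_assoc, arrB_mul_oneS]
@[simp] theorem ab_mul_arrA : ab * arrA = 0 := by rw [ab, mul_assoc, arrB_mul_arrA, mul_zero]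
@[simp] theorem ab_mul_arrB : ab * arrB = 0 := by rw [ab, mul_assoc, arrB_mul_arrB, mul_zero]

/-- For each of the five nonzero paths `p`, `p * z` is a combination of the nonzero paths `p * q`;
holding for all `z`, this exhibits the bases `1_e, b` of `1_e A` and `1_s, a, ab` of `1_s A`. -/
def PathMulForm (z : A) : Prop :=
  (∃ c₁ c₂ : ℂ, oneE * z = c₁ • oneE + c₂ • arrB) ∧
  (∃ c₁ c₂ c₃ : ℂ, oneS * z = c₁ • oneS + c₂ • arrA + c₃ • ab) ∧
  (∃ c₁ c₂ : ℂ, arrA * z = c₁ • arrA + c₂ • ab) ∧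
  (∃ c : ℂ, arrB * z = c • arrB) ∧
  (∃ c : ℂ, ab * z = c • ab)

theorem pathMulForm_algebraMap (r : ℂ) : PathMulForm (algebraMap ℂ A r) := by
  refine ⟨⟨r, 0, ?_⟩, ⟨r, 0, 0, ?_⟩, ⟨r, 0, ?_⟩, ⟨r, ?_⟩, ⟨r, ?_⟩⟩ <;>
    simp [Algebra.algebraMap_eq_smul_one]

theorem pathMulForm_gen (i : Fin 4) : PathMulForm (gen i) := by
  fin_cases i
  · change PathMulForm oneE
    exact ⟨⟨1, 0, by simp⟩, ⟨0, 0, 0, by simp⟩, ⟨1, 0, by simp⟩, ⟨0, by simp⟩, ⟨0, by simp⟩⟩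
  · change PathMulForm oneS
    exact ⟨⟨0, 0, by simp⟩, ⟨1, 0, 0, by simp⟩, ⟨0, 0, by simp⟩, ⟨1, by simp⟩, ⟨1, by simp⟩⟩
  · change PathMulForm arrA
    exact ⟨⟨0, 0, by simp⟩, ⟨0, 1, 0, by simp⟩, ⟨0, 0, by simp⟩, ⟨0, by simp⟩, ⟨0, by simp⟩⟩
  · change PathMulForm arrB
    exact ⟨⟨0, 1, by simp⟩, ⟨0, 0, 0, by simp⟩, ⟨0, 1, by simp⟩, ⟨0, by simp⟩, ⟨0, by simp⟩⟩

theorem PathMulForm.add {x y : A} (hx : PathMulForm x) (hy : PathMulForm y) :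
    PathMulForm (x + y) := by
  obtain ⟨⟨a₁, a₂, hx₁⟩, ⟨b₁, b₂, b₃, hx₂⟩, ⟨c₁, c₂, hx₃⟩, ⟨d, hx₄⟩, ⟨e, hx₅⟩⟩ := hx
  obtain ⟨⟨a₁', a₂', hy₁⟩, ⟨b₁', b₂', b₃', hy₂⟩, ⟨c₁', c₂', hy₃⟩, ⟨d', hy₄⟩, ⟨e', hy₅⟩⟩ := hy
  refine ⟨⟨a₁ + a₁', a₂ + a₂', ?_⟩, ⟨b₁ + b₁', b₂ + b₂', b₃ + b₃', ?_⟩,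
    ⟨c₁ + c₁', c₂ + c₂', ?_⟩, ⟨d + d', ?_⟩, ⟨e + e', ?_⟩⟩
  · rw [mul_add, hx₁, hy₁]; module
  · rw [mul_add, hx₂, hy₂]; module
  · rw [mul_add, hx₃, hy₃]; module
  · rw [mul_add, hx₄, hy₄]; module
  · rw [mul_add, hx₅, hy₅]; module

theorem PathMulForm.mul {x y : A} (hx : PathMulForm x) (hy : PathMulForm y) :
    PathMulForm (x * y) := by
  obtain ⟨⟨a₁, a₂, hx₁⟩, ⟨b₁, b₂, b₃, hx₂⟩, ⟨c₁, c₂, hx₃⟩, ⟨d, hx₄⟩, ⟨e, hx₅⟩⟩ := hx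
  obtain ⟨⟨a₁', a₂', hy₁⟩, ⟨b₁', b₂', b₃', hy₂⟩, ⟨c₁', c₂', hy₃⟩, ⟨d', hy₄⟩, ⟨e', hy₅⟩⟩ := hy
  refine ⟨⟨a₁ * a₁', a₁ * a₂' + a₂ * d', ?_⟩,
    ⟨b₁ * b₁', b₁ * b₂' + b₂ * c₁', b₁ * b₃' + b₂ * c₂' + b₃ * e', ?_⟩,
    ⟨c₁ * c₁', c₁ * c₂' + c₂ * e', ?_⟩, ⟨d * d', ?_⟩, ⟨e * e', ?_⟩⟩
  · rw [← mul_assoc, hx₁, add_mul, smul_mul_assoc, smul_mul_assoc, hy₁, hy₄]; module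
  · rw [← mul_assoc, hx₂, add_mul, add_mul, smul_mul_assoc, smul_mul_assoc, smul_mul_assoc,
      hy₂, hy₃, hy₅]; module
  · rw [← mul_assoc, hx₃, add_mul, smul_mul_assoc, smul_mul_assoc, hy₃, hy₅]; module
  · rw [← mul_assoc, hx₄, smul_mul_assoc, hy₄]; module
  · rw [← mul_assoc, hx₅, smul_mul_assoc, hy₅]; module

theorem pathMulForm (z : A) : PathMulForm z := by
  obtain ⟨x, rfl⟩ := RingQuot.mkAlgHom_surjective ℂ PathRel z
  change PathMulForm (toA x)
  induction x using FreeAlgebra.induction with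
  | grade0 r => rw [AlgHom.commutes]; exact pathMulForm_algebraMap r
  | grade1 i => exact pathMulForm_gen i
  | mul x y hx hy => rw [map_mul]; exact hx.mul hy
  | add x y hx hy => rw [map_add]; exact hx.add hy

/-- The left action of `A` on `A·1_s`, in the basis `1_s, b, ab`. -/
noncomputable def leftRegRep : A →ₐ[ℂ] Matrix (Fin 3) (Fin 3) ℂ :=
  RingQuot.liftAlgHom ℂ
    ⟨FreeAlgebra.lift ℂ ![!![0, 0, 0; 0, 1, 0; 0, 0, 0], !![1, 0, 0; 0, 0, 0; 0, 0, 1],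
      !![0, 0, 0; 0, 0, 0; 0, 1, 0], !![0, 0, 0; 1, 0, 0; 0, 0, 0]], by
      rintro x y h
      induction h <;> ext i j <;> fin_cases i <;> fin_cases j <;>
        simp [Matrix.mul_apply, Fin.sum_univ_three]⟩

theorem leftRegRep_arrA : leftRegRep arrA = !![0, 0, 0; 0, 0, 0; 0, 1, 0] :=
  (RingQuot.liftAlgHom_mkAlgHom_apply _ _ _ _).trans (FreeAlgebra.lift_ι_apply _ _)

theorem leftRegRep_arrB : leftRegRep arrB = !![0, 0, 0; 1, 0, 0; 0, 0, 0] :=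
  (RingQuot.liftAlgHom_mkAlgHom_apply _ _ _ _).trans (FreeAlgebra.lift_ι_apply _ _)

theorem arrB_ne_zero : arrB ≠ 0 := by
  intro h
  have := congrFun (congrFun (congrArg leftRegRep h) 1) 0
  simp [leftRegRep_arrB] at this

theorem linearIndependent_arrA_ab : LinearIndependent ℂ ![arrA, ab] := by
  refine LinearIndependent.pair_iff.mpr fun c₁ c₂ h => ?_
  have h' := congrArg leftRegRep h
  simp only [map_add, map_smul, ab, map_mul, leftRegRep_arrA, leftRegRep_arrB,
    Matrix.mul_fin_three, map_zero] at h'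
  exact ⟨by simpa using congrFun (congrFun h' 2) 1, by simpa using congrFun (congrFun h' 2) 0⟩

theorem εe_gen (i : Fin 4) : εe (gen i) = if i = 0 then 1 else 0 :=
  (RingQuot.liftAlgHom_mkAlgHom_apply _ _ _ _).trans (FreeAlgebra.lift_ι_apply _ _)

@[simp] theorem εe_oneE : εe oneE = 1 := εe_gen 0

@[simp] theorem εe_arrB : εe arrB = 0 := εe_gen 3

theorem exists_eq_of_mem_P_oneE {x : A} (hx : x ∈ P oneE) :
    ∃ c₁ c₂ : ℂ, x = c₁ • oneE + c₂ • arrB := by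
  obtain ⟨c₁, c₂, h⟩ := (pathMulForm x).1
  exact ⟨c₁, c₂, by rw [← h, isIdempotentElem_oneE.mul_eq_self_of_mem_span hx]⟩

theorem exists_eq_of_mem_P_oneS {x : A} (hx : x ∈ P oneS) :
    ∃ c₁ c₂ c₃ : ℂ, x = c₁ • oneS + c₂ • arrA + c₃ • ab := by
  obtain ⟨c₁, c₂, c₃, h⟩ := (pathMulForm x).2.1
  exact ⟨c₁, c₂, c₃, by rw [← h, isIdempotentElem_oneS.mul_eq_self_of_mem_span hx]⟩

theorem exists_oneE_mul_mul_oneE (z : A) : ∃ c : ℂ, oneE * z * oneE = c • oneE := by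
  obtain ⟨c₁, c₂, h⟩ := (pathMulForm z).1
  exact ⟨c₁, by simp [h, add_mul]⟩

theorem exists_oneE_mul_mul_oneS (z : A) : ∃ c : ℂ, oneE * z * oneS = c • arrB := by
  obtain ⟨c₁, c₂, h⟩ := (pathMulForm z).1
  exact ⟨c₂, by simp [h, add_mul]⟩

theorem mem_P_self (u : A) : u ∈ P u := Submodule.mem_span_singleton_self u

section HomsBetweenP

variable {u v : A}

theorem coe_P_smul (r : Aᵐᵒᵖ) (x : P u) : ((r • x : P u) : A) = x * unop r := by
  rw [Submodule.coe_smul, smul_eq_mul_unop]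

theorem coe_apply_eq_mul (hu : IsIdempotentElem u) (f : P u →ₗ[Aᵐᵒᵖ] P v) (x : P u) :
    (f x : A) = f ⟨u, mem_P_self u⟩ * x := by
  have hx : x = op (x : A) • ⟨u, mem_P_self u⟩ :=
    Subtype.ext (by rw [coe_P_smul, unop_op, hu.mul_eq_self_of_mem_span x.2])
  rw [hx, map_smul, coe_P_smul, unop_op, ← hx]

theorem mul_apply_mul (hu : IsIdempotentElem u) (hv : IsIdempotentElem v)
    (f : P u →ₗ[Aᵐᵒᵖ] P v) :
    v * f ⟨u, mem_P_self u⟩ * u = f ⟨u, mem_P_self u⟩ := by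
  rw [hv.mul_eq_self_of_mem_span (f _).2]
  exact (coe_apply_eq_mul hu f ⟨u, mem_P_self u⟩).symm

end HomsBetweenP

theorem exists_eq_smul_id (f : P oneE →ₗ[Aᵐᵒᵖ] P oneE) : ∃ c : ℂ, f = c • LinearMap.id := by
  obtain ⟨c, hc⟩ := exists_oneE_mul_mul_oneE (f ⟨oneE, mem_P_self oneE⟩)
  refine ⟨c, LinearMap.ext fun x => Subtype.ext ?_⟩
  rw [coe_apply_eq_mul isIdempotentElem_oneE f x,
    ← mul_apply_mul isIdempotentElem_oneE isIdempotentElem_oneE f, hc, smul_mul_assoc,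
    isIdempotentElem_oneE.mul_eq_self_of_mem_span x.2]
  rfl

theorem exists_eq_smul_lmul_arrB (g : P oneS →ₗ[Aᵐᵒᵖ] P oneE) :
    ∃ c : ℂ, g = c • lmul oneS oneE_mul_arrB := by
  obtain ⟨c, hc⟩ := exists_oneE_mul_mul_oneS (g ⟨oneS, mem_P_self oneS⟩)
  refine ⟨c, LinearMap.ext fun x => Subtype.ext ?_⟩
  rw [coe_apply_eq_mul isIdempotentElem_oneS g x,
    ← mul_apply_mul isIdempotentElem_oneS isIdempotentElem_oneE g, hc, smul_mul_assoc]
  rfl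

theorem eq_zero_of_smul_lmul_arrB_eq_zero {c : ℂ} (h : c • lmul oneS oneE_mul_arrB = 0) :
    c = 0 := by
  have h' := congrArg (fun g : P oneS →ₗ[Aᵐᵒᵖ] P oneE => (g ⟨oneS, mem_P_self oneS⟩ : A)) h
  simpa [lmul, arrB_ne_zero] using h'

theorem hom_Se_P_oneE_eq_zero (f : Se →ₗ[Aᵐᵒᵖ] P oneE) : f = 0 := by
  refine LinearMap.ext fun t => Subtype.ext ?_
  have h_oneE : (f t : A) * oneE = f t := by
    have h := congrArg Subtype.val (f.map_smul (op oneE) t)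
    rwa [Se.smul_def, unop_op, εe_oneE, one_smul, coe_P_smul, unop_op, eq_comm] at h
  have h_arrB : (f t : A) * arrB = 0 := by
    have h := congrArg Subtype.val (f.map_smul (op arrB) t)
    rwa [Se.smul_def, unop_op, εe_arrB, zero_smul, map_zero, coe_P_smul, unop_op, eq_comm] at h
  obtain ⟨c, hc⟩ := exists_oneE_mul_mul_oneE (f t)
  rw [isIdempotentElem_oneE.mul_eq_self_of_mem_span (f t).2, h_oneE] at hc
  have hc0 : c = 0 := by
    simpa [hc, smul_mul_assoc, arrB_ne_zero] using h_arrB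
  rw [hc, hc0, zero_smul]
  rfl

theorem exists_arrB_mul_eq {x : A} (hx : x ∈ P oneE) (h : εe x = 0) :
    ∃ y ∈ P oneS, arrB * y = x := by
  obtain ⟨c₁, c₂, rfl⟩ := exists_eq_of_mem_P_oneE hx
  have hc₁ : c₁ = 0 := by simpa using h
  exact ⟨c₂ • oneS, mem_P (by simp), by simp [hc₁]⟩

theorem exists_arrA_mul_eq {x : A} (hx : x ∈ P oneS) (h : arrB * x = 0) :
    ∃ y ∈ P oneE, arrA * y = x := by
  obtain ⟨c₁, c₂, c₃, rfl⟩ := exists_eq_of_mem_P_oneS hx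
  have hc₁ : c₁ = 0 := by simpa [mul_add, arrB_ne_zero] using h
  exact ⟨c₂ • oneE + c₃ • arrB, mem_P (by simp [mul_add]), by simp [hc₁, mul_add]⟩

theorem eq_zero_of_arrA_mul_eq_zero {y : A} (hy : y ∈ P oneE) (h : arrA * y = 0) : y = 0 := by
  obtain ⟨c₁, c₂, rfl⟩ := exists_eq_of_mem_P_oneE hy
  obtain ⟨rfl, rfl⟩ :=
    LinearIndependent.pair_iff.mp linearIndependent_arrA_ab c₁ c₂ (by simpa [mul_add] using h)
  simp

open Limits ZeroObject

noncomputable abbrev PsM : ModuleCat.{0} Aᵐᵒᵖ := ModuleCat.of Aᵐᵒᵖ ↥(P oneS)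

instance : Projective PeM :=
  (IsProjective.iff_projective _).mp isIdempotentElem_oneE.projective_span_singleton

instance : Projective PsM :=
  (IsProjective.iff_projective _).mp isIdempotentElem_oneS.projective_span_singleton

noncomputable def augmentation : P oneE →ₗ[Aᵐᵒᵖ] Se where
  toFun x := (εe x : ℂ)
  map_add' x y := map_add εe (x : A) y
  map_smul' r x := by
    change εe ((x : A) * unop r) = εe (unop r) * εe (x : A)
    rw [map_mul, mul_comm]

theorem augmentation_surjective : Function.Surjective augmentation := fun (t : ℂ) =>
  ⟨t • ⟨oneE, mem_P_self oneE⟩, by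
    change εe (t • oneE) = t
    rw [map_smul, εe_oneE, smul_eq_mul, mul_one]⟩

noncomputable def resolutionX : ℕ → ModuleCat.{0} Aᵐᵒᵖ
  | 0 => PeM
  | 1 => PsM
  | 2 => PeM
  | _ + 3 => 0

noncomputable def resolutionD : ∀ n : ℕ, resolutionX (n + 1) ⟶ resolutionX n
  | 0 => ModuleCat.ofHom (lmul oneS oneE_mul_arrB)
  | 1 => ModuleCat.ofHom (lmul oneE oneS_mul_arrA)
  | _ + 2 => 0

theorem lmul_arrB_comp_lmul_arrA :
    (lmul oneS oneE_mul_arrB).comp (lmul oneE oneS_mul_arrA) = 0 :=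
  LinearMap.ext fun x => Subtype.ext (by
    change arrB * (arrA * (x : A)) = 0
    rw [← mul_assoc, arrB_mul_arrA, zero_mul])

noncomputable def resolutionComplex : ChainComplex (ModuleCat.{0} Aᵐᵒᵖ) ℕ :=
  ChainComplex.of resolutionX resolutionD <| by
    rintro (_ | _ | n)
    · exact ModuleCat.hom_ext lmul_arrB_comp_lmul_arrA
    · exact zero_comp
    · exact comp_zero

theorem resolutionComplex_d_one_zero :
    resolutionComplex.d 1 0 = ModuleCat.ofHom (lmul oneS oneE_mul_arrB) :=
  ChainComplex.of_d resolutionX resolutionD 0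

theorem resolutionComplex_d_two_one :
    resolutionComplex.d 2 1 = ModuleCat.ofHom (lmul oneE oneS_mul_arrA) :=
  ChainComplex.of_d resolutionX resolutionD 1

theorem resolutionComplex_exactAt_succ (n : ℕ) : resolutionComplex.ExactAt (n + 1) := by
  rw [HomologicalComplex.exactAt_iff' _ (n + 2) (n + 1) n (by simp) (by simp)]
  match n with
  | 0 =>
    rw [ShortComplex.moduleCat_exact_iff]
    intro x hx
    obtain ⟨y, hy, hxy⟩ := exists_arrA_mul_eq x.2 (congrArg Subtype.val hx)
    exact ⟨⟨y, hy⟩, Subtype.ext hxy⟩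
  | 1 =>
    rw [ShortComplex.moduleCat_exact_iff]
    intro x hx
    have hx₀ : x = 0 := Subtype.ext (eq_zero_of_arrA_mul_eq_zero x.2 (congrArg Subtype.val hx))
    exact ⟨0, by rw [map_zero, hx₀]⟩
  | n + 2 => exact ShortComplex.exact_of_isZero_X₂ _ (isZero_zero _)

theorem augmentation_comp_lmul_arrB : augmentation.comp (lmul oneS oneE_mul_arrB) = 0 :=
  LinearMap.ext fun x => by
    change εe (arrB * (x : A)) = 0
    rw [map_mul, εe_arrB, zero_mul]

noncomputable def resolutionπ :
    resolutionComplex ⟶ (ChainComplex.single₀ (ModuleCat.{0} Aᵐᵒᵖ)).obj SeM :=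
  (ChainComplex.toSingle₀Equiv _ _).symm ⟨ModuleCat.ofHom augmentation, by
    rw [resolutionComplex_d_one_zero]
    exact ModuleCat.hom_ext augmentation_comp_lmul_arrB⟩

theorem resolutionπ_f_zero : resolutionπ.f 0 = ModuleCat.ofHom augmentation :=
  ChainComplex.toSingle₀Equiv_symm_apply_f_zero _ _

theorem resolutionπ_quasiIsoAt_zero : QuasiIsoAt resolutionπ 0 := by
  rw [ChainComplex.quasiIsoAt₀_iff, ShortComplex.quasiIso_iff_of_zeros']
  · constructor
    · rw [ShortComplex.moduleCat_exact_iff]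
      intro (x : P oneE) hx
      change (resolutionπ.f 0) x = 0 at hx
      rw [resolutionπ_f_zero] at hx
      obtain ⟨y, hy, hxy⟩ := exists_arrB_mul_eq x.2 hx
      refine ⟨⟨y, hy⟩, ?_⟩
      change (resolutionComplex.d 1 0) ⟨y, hy⟩ = x
      rw [resolutionComplex_d_one_zero]
      exact Subtype.ext hxy
    · rw [ModuleCat.epi_iff_surjective]
      change Function.Surjective (resolutionπ.f 0)
      rw [resolutionπ_f_zero]
      exact augmentation_surjective
  all_goals rfl

noncomputable def projectiveResolutionSe : ProjectiveResolution SeM where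
  complex := resolutionComplex
  projective
    | 0 => inferInstanceAs (Projective PeM)
    | 1 => inferInstanceAs (Projective PsM)
    | 2 => inferInstanceAs (Projective PeM)
    | _ + 3 => inferInstanceAs (Projective (0 : ModuleCat.{0} Aᵐᵒᵖ))
  π := resolutionπ
  quasiIso := ⟨fun n => by
    cases n with
    | zero => exact resolutionπ_quasiIsoAt_zero
    | succ n =>
      rw [quasiIsoAt_iff_exactAt']
      · exact resolutionComplex_exactAt_succ n
      · exact ChainComplex.exactAt_succ_single_obj _ _⟩

noncomputable abbrev homComplex : CochainComplex (ModuleCat ℂ) ℕ :=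
  resolutionComplex.linearYonedaObj ℂ PeM

theorem homComplex_d_zero_one_apply (f : PeM ⟶ PeM) :
    @Eq (PsM ⟶ PeM) (homComplex.d 0 1 f) (ModuleCat.ofHom (lmul oneS oneE_mul_arrB) ≫ f) := by
  rw [ChainComplex.linearYonedaObj_d, resolutionComplex_d_one_zero]
  rfl

theorem homComplex_d_one_two_apply (g : PsM ⟶ PeM) :
    @Eq (PeM ⟶ PeM) (homComplex.d 1 2 g) (ModuleCat.ofHom (lmul oneE oneS_mul_arrA) ≫ g) := by
  rw [ChainComplex.linearYonedaObj_d, resolutionComplex_d_two_one]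
  rfl

theorem homComplex_exactAt_zero : homComplex.ExactAt 0 := by
  rw [HomologicalComplex.exactAt_iff' _ 0 0 1 (by simp) (by simp),
    ShortComplex.moduleCat_exact_iff]
  intro (f : PeM ⟶ PeM) hf
  change @Eq (PsM ⟶ PeM) (homComplex.d 0 1 f) 0 at hf
  rw [homComplex_d_zero_one_apply] at hf
  obtain ⟨c, hc⟩ := exists_eq_smul_id f.hom
  have hc₀ : c = 0 := by
    refine eq_zero_of_smul_lmul_arrB_eq_zero ?_
    rw [← LinearMap.id_comp (lmul _ _), ← LinearMap.smul_comp, ← hc]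
    exact congrArg ModuleCat.Hom.hom hf
  have hf₀ : f = 0 := ModuleCat.hom_ext (by rw [hc, hc₀, zero_smul]; rfl)
  exact ⟨0, by rw [map_zero, hf₀]; rfl⟩

theorem homComplex_exactAt_one : homComplex.ExactAt 1 := by
  rw [HomologicalComplex.exactAt_iff' _ 0 1 2 (by simp) (by simp),
    ShortComplex.moduleCat_exact_iff]
  intro (g : PsM ⟶ PeM) _
  obtain ⟨c, hc⟩ := exists_eq_smul_lmul_arrB g.hom
  refine ⟨(ModuleCat.ofHom (c • LinearMap.id) : PeM ⟶ PeM), ?_⟩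
  change @Eq (PsM ⟶ PeM) (homComplex.d 0 1 _) g
  rw [homComplex_d_zero_one_apply]
  exact ModuleCat.hom_ext (by
    rw [hc, ModuleCat.hom_comp, ModuleCat.hom_ofHom, ModuleCat.hom_ofHom, LinearMap.smul_comp,
      LinearMap.id_comp])

theorem homComplex_d_one_two : homComplex.d 1 2 = 0 := by
  refine ModuleCat.hom_ext (LinearMap.ext fun (g : PsM ⟶ PeM) => ?_)
  change @Eq (PeM ⟶ PeM) (homComplex.d 1 2 g) 0
  obtain ⟨c, hc⟩ := exists_eq_smul_lmul_arrB g.hom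
  rw [homComplex_d_one_two_apply]
  refine ModuleCat.hom_ext ?_
  rw [ModuleCat.hom_comp, hc, ModuleCat.hom_ofHom, LinearMap.smul_comp, lmul_arrB_comp_lmul_arrA,
    smul_zero, ModuleCat.hom_zero]

theorem homComplex_isZero_X (n : ℕ) : IsZero (homComplex.X (n + 3)) :=
  @ModuleCat.isZero_of_subsingleton ℂ _ _
    (inferInstanceAs (Subsingleton ((0 : ModuleCat.{0} Aᵐᵒᵖ) ⟶ PeM)))

noncomputable def homComplexHomologyTwoIso : homComplex.homology 2 ≅ homComplex.X 2 :=
  homComplex.homologyIsoSc' 1 2 3 (by simp) (by simp) ≪≫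
    (ShortComplex.HomologyData.ofZeros (homComplex.sc' 1 2 3) homComplex_d_one_two
      ((homComplex_isZero_X 0).eq_of_tgt _ _)).left.homologyIso

theorem finrank_homComplex_X_two : Module.finrank ℂ (homComplex.X 2) = 1 := by
  refine (finrank_eq_one_iff_of_nonzero' (V := homComplex.X 2) (𝟙 PeM) ?_).mpr
    fun (f : PeM ⟶ PeM) => ?_
  · intro h
    have h' := congrArg (fun g : PeM ⟶ PeM => εe (g.hom ⟨oneE, mem_P_self oneE⟩ : A)) h
    change εe oneE = εe 0 at h'
    simp at h'
  · obtain ⟨c, hc⟩ := exists_eq_smul_id f.hom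
    refine ⟨c, ModuleCat.hom_ext (LinearMap.ext fun (x : P oneE) => Subtype.ext ?_)⟩
    -- `ℂ` acts on morphisms of `ModuleCat Aᵐᵒᵖ` through `algebraMap ℂ A`
    change (x : A) * algebraMap ℂ A c = (f.hom x : A)
    rw [hc, LinearMap.smul_apply, LinearMap.id_apply, Submodule.coe_smul_of_tower,
      Algebra.smul_def, Algebra.commutes]

theorem homComplex_isZero_homology {n : ℕ} (hn : n ≠ 2) : IsZero (homComplex.homology n) :=
  match n, hn with
  | 0, _ => (homComplex.exactAt_iff_isZero_homology 0).mp homComplex_exactAt_zero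
  | 1, _ => (homComplex.exactAt_iff_isZero_homology 1).mp homComplex_exactAt_one
  | n + 3, _ => ShortComplex.isZero_homology_of_isZero_X₂ (homComplex.sc (n + 3))
      (homComplex_isZero_X n)

/-- `Ext²_A(S_e, P(e)) ≅ ℂ` and `Ext^n_A(S_e, P(e)) = 0` for
`n ≠ 2`; in particular `Hom_A(S_e, P(e)) = 0` and `Ext¹_A(S_e, P(e)) = 0`. -/
theorem ext_Se_Pe :
    Module.finrank ℂ (ExtA SeM PeM 2) = 1 ∧
    (∀ n : ℕ, n ≠ 2 → Subsingleton (ExtA SeM PeM n)) ∧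
    (∀ f : Se →ₗ[Aᵐᵒᵖ] ↥(P oneE), f = 0) ∧
    Subsingleton (ExtA SeM PeM 1) := by
  have ext_iso (n : ℕ) := projectiveResolutionSe.isoExt (R := ℂ) n PeM
  have ext_subsingleton (n : ℕ) (hn : n ≠ 2) : Subsingleton (ExtA SeM PeM n) :=
    ModuleCat.subsingleton_of_isZero ((homComplex_isZero_homology hn).of_iso (ext_iso n))
  refine ⟨?_, ext_subsingleton, hom_Se_P_oneE_eq_zero, ext_subsingleton 1 (by norm_num)⟩
  rw [((ext_iso 2 ≪≫ homComplexHomologyTwoIso).toLinearEquiv).finrank_eq]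
  exact finrank_homComplex_X_two

end Sl2Q
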